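/- Suppose ψ := √ρ · e^{iS} satisfies the Schrödinger equation iħ ∂_t ψ(x,t) = −(ħ²/(2m)) Δψ(x,t) + V(x,t) ψ(x,t) at every (x,t) ∈ ℝ^d × ℝ. Define the current velocity v := (ħ/m) ∇S and the osmotic velocity u := (ħ/(2m)) ∇ log ρ. Then for every real ν ≥ 0 the quantum density ρ = |ψ|² satisfies, at every (x,t), the Fokker–Planck equation ∂_t ρ = −⟨∇, (v + ν u) ρ⟩ + (ν ħ/(2m)) Δρ of the Nelson diffusion dX(t) = (v + νu)(X(t),t) dt + √(νħ/m) dW(t). -/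

import Mathlib

noncomputable section

/-- Spatial partial derivative in the `j`-th coordinate direction. -/
def pdx {d : ℕ} {E : Type*} [NormedAddCommGroup E] [NormedSpace ℝ E]
    (j : Fin d) (f : (Fin d → ℝ) → E) (x : Fin d → ℝ) : E :=
  fderiv ℝ f x (Pi.single j 1)

/-- The wave function `ψ = √ρ · e^{iS}`. -/
def psi {d : ℕ} (ρ S : (Fin d → ℝ) → ℝ → ℝ) (x : Fin d → ℝ) (t : ℝ) : ℂ :=
  (Real.sqrt (ρ x t) : ℂ) * Complex.exp (Complex.I * (S x t : ℂ))

/-- The current velocity `v = (ℏ/m) ∇S` (the `i`-th component). -/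
def cvel {d : ℕ} (ℏ m : ℝ) (S : (Fin d → ℝ) → ℝ → ℝ)
    (x : Fin d → ℝ) (t : ℝ) (i : Fin d) : ℝ :=
  (ℏ / m) * pdx i (fun y => S y t) x

/-- The osmotic velocity `u = (ℏ/(2m)) ∇ log ρ` (the `i`-th component). -/
def ovel {d : ℕ} (ℏ m : ℝ) (ρ : (Fin d → ℝ) → ℝ → ℝ)
    (x : Fin d → ℝ) (t : ℝ) (i : Fin d) : ℝ :=
  (ℏ / (2 * m)) * pdx i (fun y => Real.log (ρ y t)) x

/-- The time-dependent Schrödinger equation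
`iℏ ∂ₜψ = −(ℏ²/(2m)) Δψ + V ψ` holding at every point `(x, t)`. -/
def SchrodingerEq {d : ℕ} (ℏ m : ℝ) (V : (Fin d → ℝ) → ℝ → ℝ)
    (ψ : (Fin d → ℝ) → ℝ → ℂ) : Prop :=
  ∀ (x : Fin d → ℝ) (t : ℝ),
    Complex.I * (ℏ : ℂ) * deriv (fun s => ψ x s) t
      = -((ℏ : ℂ) ^ 2 / (2 * (m : ℂ)))
            * (∑ j : Fin d, pdx j (fun y => pdx j (fun z => ψ z t) y) x)
        + (V x t : ℂ) * ψ x t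


/-!
Write `ψ = R e^{iS}` with `R = √ρ`. Dividing the Schrödinger equation by `e^{iS}` and taking
imaginary parts gives `ℏ ∂ₜR = -(ℏ²/2m) ∑ⱼ (2 ∂ⱼR ∂ⱼS + R ∂ⱼ²S)`; multiplied by `2R` this is the
continuity equation `∂ₜρ = -⟨∇, v ρ⟩`. Since `u ρ = (ℏ/2m) ∇ρ`, the osmotic drift contributes
`-(νℏ/2m) Δρ`, which cancels the diffusion term for every `ν`.
-/

open Complex

section Slices

variable {𝕜 X Y Z : Type*} [NontriviallyNormedField 𝕜] [NormedAddCommGroup X] [NormedSpace 𝕜 X]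
  [NormedAddCommGroup Y] [NormedSpace 𝕜 Y] [NormedAddCommGroup Z] [NormedSpace 𝕜 Z]
  {n : WithTop ℕ∞} {f : X → Y → Z}

lemma ContDiff.uncurry_left (x : X) (h : ContDiff 𝕜 n (Function.uncurry f)) :
    ContDiff 𝕜 n (f x) :=
  h.comp (contDiff_const.prodMk contDiff_id)

lemma ContDiff.uncurry_right (y : Y) (h : ContDiff 𝕜 n (Function.uncurry f)) :
    ContDiff 𝕜 n fun x => f x y :=
  h.comp (contDiff_id.prodMk contDiff_const)

end Slices

section PartialDerivative

variable {d : ℕ} {E : Type*} [NormedAddCommGroup E] [NormedSpace ℝ E]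

lemma HasFDerivAt.pdx_eq {f : (Fin d → ℝ) → E} {L : (Fin d → ℝ) →L[ℝ] E} {x : Fin d → ℝ}
    (h : HasFDerivAt f L x) (j : Fin d) : pdx j f x = L (Pi.single j 1) := by
  rw [pdx, h.fderiv]

lemma ContDiff.pdx {n : WithTop ℕ∞} {f : (Fin d → ℝ) → E} (hf : ContDiff ℝ (n + 1) f)
    (j : Fin d) : ContDiff ℝ n (pdx j f) :=
  (hf.fderiv_right le_rfl).clm_apply contDiff_const

lemma pdx_add {f g : (Fin d → ℝ) → E} {x : Fin d → ℝ} (j : Fin d)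
    (hf : DifferentiableAt ℝ f x) (hg : DifferentiableAt ℝ g x) :
    pdx j (fun y => f y + g y) x = pdx j f x + pdx j g x :=
  (hf.hasFDerivAt.add hg.hasFDerivAt).pdx_eq j

lemma pdx_mul {𝔸 : Type*} [NormedCommRing 𝔸] [NormedAlgebra ℝ 𝔸] {f g : (Fin d → ℝ) → 𝔸}
    {x : Fin d → ℝ} (j : Fin d) (hf : DifferentiableAt ℝ f x) (hg : DifferentiableAt ℝ g x) :
    pdx j (fun y => f y * g y) x = pdx j f x * g x + f x * pdx j g x := by
  rw [(hf.hasFDerivAt.fun_mul hg.hasFDerivAt).pdx_eq j, pdx, pdx]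
  simp only [add_apply, smul_apply, smul_eq_mul]
  ring

lemma pdx_const_mul {𝔸 : Type*} [NormedRing 𝔸] [NormedAlgebra ℝ 𝔸] {f : (Fin d → ℝ) → 𝔸}
    {x : Fin d → ℝ} (c : 𝔸) (j : Fin d) (hf : DifferentiableAt ℝ f x) :
    pdx j (fun y => c * f y) x = c * pdx j f x :=
  (hf.hasFDerivAt.const_mul c).pdx_eq j

end PartialDerivative

section PolarForm

variable {F : Type*} [NormedAddCommGroup F] [NormedSpace ℝ F]

lemma HasFDerivAt.ofReal_comp {f : F → ℝ} {f' : F →L[ℝ] ℝ} {x : F} (hf : HasFDerivAt f f' x) :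
    HasFDerivAt (fun z => (f z : ℂ)) (ofRealCLM.comp f') x :=
  ofRealCLM.hasFDerivAt.comp x hf

lemma fderiv_mul_cexp_I_mul_apply {A : F → ℂ} {S : F → ℝ} {x : F}
    (hA : DifferentiableAt ℝ A x) (hS : DifferentiableAt ℝ S x) (v : F) :
    fderiv ℝ (fun z => A z * exp (I * S z)) x v
      = (fderiv ℝ A x v + I * A x * fderiv ℝ S x v) * exp (I * S x) := by
  rw [(hA.hasFDerivAt.fun_mul (hS.hasFDerivAt.ofReal_comp.const_mul I).cexp).fderiv]
  simp only [add_apply, smul_apply, smul_eq_mul,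
    ContinuousLinearMap.coe_comp, Function.comp_apply, ofRealCLM_apply]
  ring

lemma deriv_mul_cexp_I_mul {A : ℝ → ℂ} {S : ℝ → ℝ} {t : ℝ}
    (hA : DifferentiableAt ℝ A t) (hS : DifferentiableAt ℝ S t) :
    deriv (fun s => A s * exp (I * S s)) t
      = (deriv A t + I * A t * deriv S t) * exp (I * S t) := by
  simpa only [fderiv_apply_one_eq_deriv] using fderiv_mul_cexp_I_mul_apply hA hS 1

variable {d : ℕ}

lemma pdx_ofReal {f : (Fin d → ℝ) → ℝ} {x : Fin d → ℝ} (j : Fin d)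
    (hf : DifferentiableAt ℝ f x) : pdx j (fun y => (f y : ℂ)) x = pdx j f x :=
  hf.hasFDerivAt.ofReal_comp.pdx_eq j

lemma pdx_mul_cexp_I_mul {A : (Fin d → ℝ) → ℂ} {S : (Fin d → ℝ) → ℝ} {x : Fin d → ℝ}
    (j : Fin d) (hA : DifferentiableAt ℝ A x) (hS : DifferentiableAt ℝ S x) :
    pdx j (fun z => A z * exp (I * S z)) x
      = (pdx j A x + I * A x * (pdx j S x : ℝ)) * exp (I * S x) :=
  fderiv_mul_cexp_I_mul_apply hA hS _

lemma pdx_pdx_ofReal_mul_cexp_I_mul {R S : (Fin d → ℝ) → ℝ} (hR : ContDiff ℝ 2 R)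
    (hS : ContDiff ℝ 2 S) (j : Fin d) (x : Fin d → ℝ) :
    pdx j (pdx j (fun z => (R z : ℂ) * exp (I * S z))) x
      = ((pdx j (pdx j R) x : ℝ) + 2 * I * (pdx j R x : ℝ) * (pdx j S x : ℝ)
          + I * R x * (pdx j (pdx j S) x : ℝ) - R x * (pdx j S x : ℝ) ^ 2)
        * exp (I * S x) := by
  have dR := hR.differentiable two_ne_zero
  have dS := hS.differentiable two_ne_zero
  have dRj := (hR.pdx j).differentiable one_ne_zero
  have dSj := (hS.pdx j).differentiable one_ne_zero
  have first : pdx j (fun z => (R z : ℂ) * exp (I * S z))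
      = fun y => ((pdx j R y : ℝ) + I * R y * (pdx j S y : ℝ)) * exp (I * S y) := by
    funext y
    rw [pdx_mul_cexp_I_mul j (dR y).hasFDerivAt.ofReal_comp.differentiableAt (dS y),
      pdx_ofReal j (dR y)]
  have ofReal_diff {f : (Fin d → ℝ) → ℝ} (hf : Differentiable ℝ f) (y) :
      DifferentiableAt ℝ (fun z => (f z : ℂ)) y :=
    (hf y).hasFDerivAt.ofReal_comp.differentiableAt
  have hIR := (ofReal_diff dR x).const_mul I
  have hIRSj := hIR.fun_mul (ofReal_diff dSj x)
  rw [first, pdx_mul_cexp_I_mul j ((ofReal_diff dRj x).fun_add hIRSj) (dS x),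
    pdx_add j (ofReal_diff dRj x) hIRSj,
    pdx_mul j hIR (ofReal_diff dSj x), pdx_const_mul I j (ofReal_diff dR x),
    pdx_ofReal j (dRj x), pdx_ofReal j (dR x), pdx_ofReal j (dSj x)]
  linear_combination (R x * ((pdx j S x : ℝ) : ℂ) ^ 2 * exp (I * S x)) * I_sq

end PolarForm

section Madelung

variable {d : ℕ} {ℏ m : ℝ} {V ρ S : (Fin d → ℝ) → ℝ → ℝ} {x : Fin d → ℝ} {t : ℝ}

/-- The imaginary part of the Schrödinger equation for `ψ = √ρ e^{iS}`, after division by the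
phase `e^{iS}`; the real potential `V` drops out. -/
lemma SchrodingerEq.hbar_mul_deriv_sqrt (h : SchrodingerEq ℏ m V (psi ρ S))
    (hR : ContDiff ℝ 2 (fun z => √(ρ z t))) (hS : ContDiff ℝ 2 (fun z => S z t))
    (hRt : DifferentiableAt ℝ (fun s => √(ρ x s)) t)
    (hSt : DifferentiableAt ℝ (fun s => S x s) t) :
    ℏ * deriv (fun s => √(ρ x s)) t
      = -(ℏ ^ 2 / (2 * m)) * ∑ j, (2 * pdx j (fun z => √(ρ z t)) x * pdx j (fun z => S z t) x
          + √(ρ x t) * pdx j (pdx j (fun z => S z t)) x) := by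
  have hx := h x t
  simp only [psi] at hx
  rw [deriv_mul_cexp_I_mul hRt.hasDerivAt.ofReal_comp.differentiableAt hSt,
    hRt.hasDerivAt.ofReal_comp.deriv] at hx
  simp only [pdx_pdx_ofReal_mul_cexp_I_mul hR hS] at hx
  have key : I * ℏ * ((deriv (fun s => √(ρ x s)) t : ℝ)
        + I * √(ρ x t) * (deriv (fun s => S x s) t : ℝ))
      = -((ℏ ^ 2 / (2 * m) : ℝ) : ℂ) * ∑ j, ((pdx j (pdx j (fun z => √(ρ z t))) x : ℝ)
          + 2 * I * (pdx j (fun z => √(ρ z t)) x : ℝ) * (pdx j (fun z => S z t) x : ℝ)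
          + I * √(ρ x t) * (pdx j (pdx j (fun z => S z t)) x : ℝ)
          - (√(ρ x t) * pdx j (fun z => S z t) x ^ 2 : ℝ))
        + V x t * √(ρ x t) :=
    mul_right_cancel₀ (exp_ne_zero (I * S x t)) <| by
      rw [← Finset.sum_mul] at hx
      push_cast
      linear_combination hx
  simpa only [im_sum, mul_im, mul_re, add_im, add_re, sub_im, sub_re, neg_im, neg_re, I_re, I_im,
    ofReal_re, ofReal_im, re_ofNat, im_ofNat, mul_zero, zero_mul, mul_one, one_mul, sub_zero,
    add_zero, zero_add, zero_sub, neg_zero] using congrArg im key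

lemma SchrodingerEq.continuity_equation (h : SchrodingerEq ℏ m V (psi ρ S)) (hℏ : ℏ ≠ 0)
    (hρ : ContDiff ℝ 2 (fun z => ρ z t)) (hpos : ∀ z, 0 < ρ z t)
    (hS : ContDiff ℝ 2 (fun z => S z t)) (hρt : DifferentiableAt ℝ (fun s => ρ x s) t)
    (hSt : DifferentiableAt ℝ (fun s => S x s) t) :
    deriv (fun s => ρ x s) t = -∑ j, pdx j (fun y => cvel ℏ m S y t j * ρ y t) x := by
  have hR : ContDiff ℝ 2 (fun z => √(ρ z t)) := hρ.sqrt fun z => (hpos z).ne'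
  have hsqrt : √(ρ x t) ≠ 0 := (Real.sqrt_pos.2 (hpos x)).ne'
  have hRt := hρt.hasDerivAt.sqrt (hpos x).ne'
  have hρdot : deriv (fun s => ρ x s) t = 2 * √(ρ x t) * deriv (fun s => √(ρ x s)) t := by
    rw [hRt.deriv]; field_simp
  have hρj (j : Fin d) :
      pdx j (fun z => ρ z t) x = 2 * √(ρ x t) * pdx j (fun z => √(ρ z t)) x := by
    rw [((hρ.differentiable two_ne_zero x).hasFDerivAt.sqrt (hpos x).ne').pdx_eq j, pdx]
    simp only [smul_apply, smul_eq_mul]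
    field_simp
  have hflux (j : Fin d) : pdx j (fun y => cvel ℏ m S y t j * ρ y t) x
      = ℏ / m * √(ρ x t) * (2 * pdx j (fun z => √(ρ z t)) x * pdx j (fun z => S z t) x
          + √(ρ x t) * pdx j (pdx j (fun z => S z t)) x) := by
    have hSj := (hS.pdx j).differentiable one_ne_zero x
    simp only [cvel]
    rw [pdx_mul j (hSj.const_mul _) (hρ.differentiable two_ne_zero x), pdx_const_mul _ j hSj, hρj]
    linear_combination
      -(ℏ / m * pdx j (pdx j (fun z => S z t)) x) * Real.mul_self_sqrt (hpos x).le
  have hmadelung := h.hbar_mul_deriv_sqrt hR hS hRt.differentiableAt hSt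
  refine mul_left_cancel₀ hℏ ?_
  rw [Finset.sum_congr rfl fun j _ => hflux j, ← Finset.mul_sum, hρdot]
  linear_combination 2 * √(ρ x t) * hmadelung

end Madelung

lemma ovel_mul_self {d : ℕ} {ℏ m : ℝ} {ρ : (Fin d → ℝ) → ℝ → ℝ} {y : Fin d → ℝ} {t : ℝ}
    (hρ : DifferentiableAt ℝ (fun z => ρ z t) y) (hpos : ρ y t ≠ 0) (j : Fin d) :
    ovel ℏ m ρ y t j * ρ y t = ℏ / (2 * m) * pdx j (fun z => ρ z t) y := by
  rw [ovel, (hρ.hasFDerivAt.log hpos).pdx_eq j, pdx]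
  simp only [smul_apply, smul_eq_mul]
  field_simp

lemma pdx_nelson_drift_mul {d : ℕ} {ℏ m ν : ℝ} {ρ S : (Fin d → ℝ) → ℝ → ℝ} {t : ℝ}
    (hρ : ContDiff ℝ 2 (fun z => ρ z t)) (hpos : ∀ z, ρ z t ≠ 0)
    (hS : ContDiff ℝ 2 (fun z => S z t)) (j : Fin d) (x : Fin d → ℝ) :
    pdx j (fun y => (cvel ℏ m S y t j + ν * ovel ℏ m ρ y t j) * ρ y t) x
      = pdx j (fun y => cvel ℏ m S y t j * ρ y t) x
        + ν * ℏ / (2 * m) * pdx j (pdx j (fun z => ρ z t)) x := by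
  have hdρ := hρ.differentiable two_ne_zero
  have hdρj := (hρ.pdx j).differentiable one_ne_zero x
  have hdv : DifferentiableAt ℝ (fun y => cvel ℏ m S y t j * ρ y t) x :=
    (((hS.pdx j).differentiable one_ne_zero x).const_mul _).mul (hdρ x)
  have hsplit : (fun y => (cvel ℏ m S y t j + ν * ovel ℏ m ρ y t j) * ρ y t)
      = fun y => cvel ℏ m S y t j * ρ y t + ν * ℏ / (2 * m) * pdx j (fun z => ρ z t) y := by
    funext y
    rw [add_mul, mul_assoc, ovel_mul_self (hdρ y) (hpos y)]
    ring
  rw [hsplit, pdx_add j hdv (hdρj.const_mul _), pdx_const_mul _ j hdρj]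

theorem schrodinger_implies_fokker_planck_general
    (d : ℕ) (ℏ m : ℝ) (hℏ : 0 < ℏ)
    (ρ S V : (Fin d → ℝ) → ℝ → ℝ)
    (hρ : ContDiff ℝ (⊤ : ℕ∞) (Function.uncurry ρ))
    (hρpos : ∀ x t, 0 < ρ x t)
    (hS : ContDiff ℝ (⊤ : ℕ∞) (Function.uncurry S))
    (hschrod : SchrodingerEq ℏ m V (psi ρ S)) :
    ∀ ν : ℝ, 0 ≤ ν →
      ∀ (x : Fin d → ℝ) (t : ℝ),
        deriv (fun s => ρ x s) t
          = -(∑ j : Fin d,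
                pdx j (fun y => (cvel ℏ m S y t j + ν * ovel ℏ m ρ y t j) * ρ y t) x)
            + (ν * ℏ / (2 * m))
                * (∑ j : Fin d, pdx j (fun y => pdx j (fun z => ρ z t) y) x) := by
  intro ν _ x t
  have htwo : (2 : WithTop ℕ∞) ≤ (⊤ : ℕ∞) := WithTop.coe_le_coe.2 le_top
  have hρx := (hρ.uncurry_right t).of_le htwo
  have hSx := (hS.uncurry_right t).of_le htwo
  have hρt := ((hρ.uncurry_left x).differentiable (by simp)) t
  have hSt := ((hS.uncurry_left x).differentiable (by simp)) t
  rw [Finset.sum_congr rfl fun j _ => pdx_nelson_drift_mul hρx (fun z => (hρpos z t).ne') hSx j x,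
    Finset.sum_add_distrib, ← Finset.mul_sum,
    hschrod.continuity_equation hℏ.ne' hρx (hρpos · t) hSx hρt hSt]
  ring

/-- If `ψ = √ρ · e^{iS}` satisfies the Schrödinger equation at every
point, then for every `ν ≥ 0` the quantum density `ρ = |ψ|²` satisfies the Fokker–Planck
equation `∂ₜρ = −⟨∇, (v + ν u) ρ⟩ + (νℏ/(2m)) Δρ` of the Nelson diffusion, where
`v = (ℏ/m) ∇S` and `u = (ℏ/(2m)) ∇ log ρ`. -/
theorem schrodinger_implies_fokker_planck
    (d : ℕ) (hd : 1 ≤ d) (ℏ m : ℝ) (hℏ : 0 < ℏ) (hm : 0 < m)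
    (ρ S V : (Fin d → ℝ) → ℝ → ℝ)
    (hρ : ContDiff ℝ (⊤ : ℕ∞) (Function.uncurry ρ))
    (hρpos : ∀ x t, 0 < ρ x t)
    (hS : ContDiff ℝ (⊤ : ℕ∞) (Function.uncurry S))
    (hV : ContDiff ℝ (⊤ : ℕ∞) (Function.uncurry V))
    (hschrod : SchrodingerEq ℏ m V (psi ρ S)) :
    ∀ ν : ℝ, 0 ≤ ν →
      ∀ (x : Fin d → ℝ) (t : ℝ),
        deriv (fun s => ρ x s) t
          = -(∑ j : Fin d,
                pdx j (fun y => (cvel ℏ m S y t j + ν * ovel ℏ m ρ y t j) * ρ y t) x)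
            + (ν * ℏ / (2 * m))
                * (∑ j : Fin d, pdx j (fun y => pdx j (fun z => ρ z t) y) x) :=
  schrodinger_implies_fokker_planck_general d ℏ m hℏ ρ S V hρ hρpos hS hschrod
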